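/- arXiv:2511.04633 — 2 statements merged into one kernel-verified Lean document; each statement's English description precedes it below -/
import Mathlib

section
/- Let S ⊆ 𝔽₂ᵏ be a linear subspace of dimension r, and let T̄⊥ ⊆ S⊥ be a fixed subspace of dimension t = k - r - s (where r + s ≤ k). If T⊥ is sampled by choosing a uniformly random sequence of t vectors in S⊥, each chosen uniformly outside the span of the previously chosen ones (so that T⊥ is a uniformly random t-dimensional subspace of S⊥), then the probability that T⊥ ∩ T̄⊥ ≠ {0} is strictly less than 2^(t-s). -/
open Module Submodule

/-- The dual (orthogonal complement with respect to the standard bilinear form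
`⟨u,v⟩ = ∑ i, u i * v i`) of a subspace of `𝔽₂ᵏ`. -/
def dualSub {k : ℕ} (S : Submodule (ZMod 2) (Fin k → ZMod 2)) :
    Submodule (ZMod 2) (Fin k → ZMod 2) where
  carrier := {v | ∀ u ∈ S, ∑ i, u i * v i = 0}
  add_mem' := by
    intro a b ha hb u hu
    simp only [Set.mem_setOf_eq] at *
    simp [Pi.add_apply, mul_add, Finset.sum_add_distrib, ha u hu, hb u hu]
  zero_mem' := by
    intro u hu
    simp
  smul_mem' := by
    intro c v hv u hu
    simp only [Set.mem_setOf_eq] at *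
    calc ∑ i, u i * (c • v) i = ∑ i, c * (u i * v i) := by
          refine Finset.sum_congr rfl fun i _ => ?_
          simp [Pi.smul_apply, smul_eq_mul]; ring
      _ = c * ∑ i, u i * v i := by rw [Finset.mul_sum]
      _ = 0 := by rw [hv u hu, mul_zero]

section Aux

theorem exists_linearEquiv_apply_eq {K V : Type*} [Field K] [AddCommGroup V] [Module K V]
    [FiniteDimensional K V] {v w : V} (hv : v ≠ 0) (hw : w ≠ 0) :
    ∃ e : V ≃ₗ[K] V, e v = w := by
  obtain ⟨Cv, hCv⟩ := Submodule.exists_isCompl (K ∙ v)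
  obtain ⟨Cw, hCw⟩ := Submodule.exists_isCompl (K ∙ w)
  have h1 : finrank K (K ∙ v) = 1 := finrank_span_singleton hv
  have h2 : finrank K (K ∙ w) = 1 := finrank_span_singleton hw
  have hC : finrank K Cv = finrank K Cw := by
    have e1 := Submodule.finrank_add_eq_of_isCompl hCv
    have e2 := Submodule.finrank_add_eq_of_isCompl hCw
    omega
  let es : (K ∙ v) ≃ₗ[K] (K ∙ w) :=
    (LinearEquiv.toSpanNonzeroSingleton K V v hv).symm.trans
      (LinearEquiv.toSpanNonzeroSingleton K V w hw)
  let ec : Cv ≃ₗ[K] Cw := LinearEquiv.ofFinrankEq _ _ hC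
  refine ⟨(Submodule.prodEquivOfIsCompl _ _ hCv).symm.trans
    ((es.prodCongr ec).trans (Submodule.prodEquivOfIsCompl _ _ hCw)), ?_⟩
  have hvmem : v ∈ K ∙ v := Submodule.mem_span_singleton_self v
  have hstep : (Submodule.prodEquivOfIsCompl _ _ hCv).symm v = (⟨v, hvmem⟩, 0) := by
    apply (Submodule.prodEquivOfIsCompl _ _ hCv).injective
    rw [LinearEquiv.apply_symm_apply]
    simp [Submodule.coe_prodEquivOfIsCompl']
  simp only [LinearEquiv.trans_apply, hstep, LinearEquiv.prodCongr_apply,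
    Submodule.coe_prodEquivOfIsCompl']
  have : es ⟨v, hvmem⟩ = ⟨w, Submodule.mem_span_singleton_self w⟩ := by
    have hv1 : (LinearEquiv.toSpanNonzeroSingleton K V v hv) 1 = ⟨v, hvmem⟩ := by
      ext; simp
    simp only [es, LinearEquiv.trans_apply, ← hv1, LinearEquiv.symm_apply_apply]
    ext; simp
  simp [this]

theorem nat_card_sigma {ι : Type*} [Fintype ι] (f : ι → Type*) [∀ i, Finite (f i)] :
    Nat.card (Σ i, f i) = ∑ i, Nat.card (f i) := by
  have (i : ι) : Fintype (f i) := Fintype.ofFinite _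
  simp [Nat.card_eq_fintype_card]

theorem card_mod (T : Type*) [AddCommGroup T] [Module (ZMod 2) T] [Finite T] :
    Nat.card T = 2 ^ finrank (ZMod 2) T := by
  have : Fintype T := Fintype.ofFinite T
  rw [Nat.card_eq_fintype_card, card_eq_pow_finrank (K := ZMod 2), ZMod.card]

theorem card_nonzero (T : Type*) [AddCommGroup T] [Module (ZMod 2) T] [Finite T] :
    Nat.card {v : T // v ≠ 0} = 2 ^ finrank (ZMod 2) T - 1 := by
  have : Fintype T := Fintype.ofFinite T
  classical
  rw [Nat.card_eq_fintype_card, Fintype.card_subtype_compl (p := fun v : T => v = 0)]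
  rw [Fintype.card_subtype_eq, ← Nat.card_eq_fintype_card, card_mod]

variable {W : Type*} [AddCommGroup W] [Module (ZMod 2) W] [Finite W]

instance : Finite (Submodule (ZMod 2) W) :=
  Finite.of_injective (fun T => (T : Set W)) SetLike.coe_injective

theorem card_mem_eq (t : ℕ) {v w : W} (hv : v ≠ 0) (hw : w ≠ 0) :
    Nat.card {T : Submodule (ZMod 2) W // finrank (ZMod 2) T = t ∧ v ∈ T}
      = Nat.card {T : Submodule (ZMod 2) W // finrank (ZMod 2) T = t ∧ w ∈ T} := by
  obtain ⟨e, he⟩ := exists_linearEquiv_apply_eq (K := ZMod 2) hv hw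
  apply Nat.card_congr
  refine Equiv.subtypeEquiv (Submodule.orderIsoMapComap e).toEquiv fun T => ?_
  have h1 : finrank (ZMod 2) (T.map (e : W →ₗ[ZMod 2] W)) = finrank (ZMod 2) T :=
    LinearEquiv.finrank_map_eq e T
  have h2 : w ∈ T.map (e : W →ₗ[ZMod 2] W) ↔ v ∈ T := by
    rw [← he, Submodule.mem_map_equiv]
    simp
  have h3 : ((Submodule.orderIsoMapComap e).toEquiv T : Submodule (ZMod 2) W)
      = T.map (e : W →ₗ[ZMod 2] W) := rfl
  rw [h3, h1, h2]

/-- generic fiberwise pair count over the vector coordinate -/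
theorem pair_count {α : Type*} [Fintype α] (t : ℕ) (ρ : α → W) (N : ℕ)
    (hN : ∀ a, ρ a ≠ 0 →
      Nat.card {T : Submodule (ZMod 2) W // finrank (ZMod 2) T = t ∧ ρ a ∈ T} = N) :
    Nat.card {p : α × {T : Submodule (ZMod 2) W // finrank (ZMod 2) T = t} //
        ρ p.1 ≠ 0 ∧ ρ p.1 ∈ p.2.1}
      = Nat.card {a : α // ρ a ≠ 0} * N := by
  classical
  rw [Nat.card_congr (Equiv.subtypeProdEquivSigmaSubtype
    (fun (a : α) (T : {T : Submodule (ZMod 2) W // finrank (ZMod 2) T = t}) =>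
      ρ a ≠ 0 ∧ ρ a ∈ T.1)), nat_card_sigma]
  have hterm : ∀ a : α,
      Nat.card {T : {T : Submodule (ZMod 2) W // finrank (ZMod 2) T = t} //
        ρ a ≠ 0 ∧ ρ a ∈ T.1} = if ρ a ≠ 0 then N else 0 := by
    intro a
    by_cases ha : ρ a ≠ 0
    · rw [if_pos ha, ← hN a ha]
      apply Nat.card_congr
      exact ⟨fun T => ⟨T.1.1, T.1.2, T.2.2⟩, fun T => ⟨⟨T.1, T.2.1⟩, ha, T.2.2⟩,
        fun T => rfl, fun T => rfl⟩
    · rw [if_neg ha]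
      have : IsEmpty {T : {T : Submodule (ZMod 2) W // finrank (ZMod 2) T = t} //
          ρ a ≠ 0 ∧ ρ a ∈ T.1} := ⟨fun T => ha T.2.1⟩
      exact Nat.card_of_isEmpty
  rw [Finset.sum_congr rfl fun a _ => hterm a, ← Finset.sum_filter, Finset.sum_const,
    smul_eq_mul, Nat.card_eq_fintype_card, Fintype.card_subtype]

/-- fiberwise pair count over the subspace coordinate -/
theorem pair_count_T (t : ℕ) :
    Nat.card {p : W × {T : Submodule (ZMod 2) W // finrank (ZMod 2) T = t} //
        p.1 ≠ 0 ∧ p.1 ∈ p.2.1}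
      = Nat.card {T : Submodule (ZMod 2) W // finrank (ZMod 2) T = t} * (2 ^ t - 1) := by
  classical
  have : Fintype {T : Submodule (ZMod 2) W // finrank (ZMod 2) T = t} := Fintype.ofFinite _
  have e1 : {p : W × {T : Submodule (ZMod 2) W // finrank (ZMod 2) T = t} //
        p.1 ≠ 0 ∧ p.1 ∈ p.2.1}
      ≃ {p : {T : Submodule (ZMod 2) W // finrank (ZMod 2) T = t} × W //
        p.2 ≠ 0 ∧ p.2 ∈ p.1.1} :=
    (Equiv.prodComm _ _).subtypeEquiv (fun p => Iff.rfl)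
  rw [Nat.card_congr e1, Nat.card_congr (Equiv.subtypeProdEquivSigmaSubtype
    (fun (T : {T : Submodule (ZMod 2) W // finrank (ZMod 2) T = t}) (v : W) =>
      v ≠ 0 ∧ v ∈ T.1)), nat_card_sigma]
  have hterm : ∀ T : {T : Submodule (ZMod 2) W // finrank (ZMod 2) T = t},
      Nat.card {v : W // v ≠ 0 ∧ v ∈ T.1} = 2 ^ t - 1 := by
    intro T
    have e2 : {v : W // v ≠ 0 ∧ v ∈ T.1} ≃ {x : T.1 // x ≠ 0} :=
      ⟨fun v => ⟨⟨v.1, v.2.2⟩, by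
          simp only [ne_eq, Submodule.mk_eq_zero]
          exact v.2.1⟩,
       fun x => ⟨x.1.1, fun h => x.2 (Subtype.ext h), x.1.2⟩,
       fun v => rfl, fun x => rfl⟩
    rw [Nat.card_congr e2, card_nonzero, T.2]
  rw [Finset.sum_congr rfl fun T _ => hterm T, Finset.sum_const, smul_eq_mul,
    Finset.card_univ, ← Nat.card_eq_fintype_card]

theorem numeric_ineq (t s n : ℕ) (ht : 1 ≤ t) (hn : t + s ≤ n) :
    (2 ^ t - 1) * (2 ^ t - 1) * 2 ^ s < 2 ^ t * (2 ^ n - 1) := by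
  have h1 : 2 ^ t * 2 ^ s ≤ 2 ^ n := by
    rw [← pow_add]; exact Nat.pow_le_pow_right (by norm_num) hn
  have h2 : 2 ≤ 2 ^ t := by
    calc 2 = 2 ^ 1 := rfl
    _ ≤ 2 ^ t := Nat.pow_le_pow_right (by norm_num) ht
  have h3 : (1 : ℕ) ≤ 2 ^ s := Nat.one_le_two_pow
  have h4 : (1 : ℕ) ≤ 2 ^ n := Nat.one_le_two_pow
  obtain ⟨a, ha⟩ : ∃ a, 2 ^ t = a + 2 := ⟨2 ^ t - 2, by omega⟩
  obtain ⟨m, hm⟩ : ∃ m, 2 ^ n = m + 1 := ⟨2 ^ n - 1, by omega⟩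
  have h1' : (a + 2) * 2 ^ s ≤ m + 1 := by rw [← ha, ← hm]; exact h1
  rw [ha, hm]
  have hs1 : a + 2 - 1 = a + 1 := by omega
  have hs2 : m + 1 - 1 = m := by omega
  rw [hs1, hs2]
  nlinarith [h1', h3, Nat.mul_le_mul_left (a + 2) h1',
    Nat.mul_le_mul_left (2 * a + 3) h3]

/-- Main counting theorem inside a finite `𝔽₂`-module. -/
theorem main_count (t s : ℕ) (hn : t + s ≤ finrank (ZMod 2) W)
    (Tb : Submodule (ZMod 2) W) (hTb : finrank (ZMod 2) Tb = t) :
    Nat.card {T : Submodule (ZMod 2) W // finrank (ZMod 2) T = t ∧ T ⊓ Tb ≠ ⊥} * 2 ^ s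
      < 2 ^ t * Nat.card {T : Submodule (ZMod 2) W // finrank (ZMod 2) T = t} := by
  classical
  have hne : Nonempty {T : Submodule (ZMod 2) W // finrank (ZMod 2) T = t} := ⟨⟨Tb, hTb⟩⟩
  have cardApos : 0 < Nat.card {T : Submodule (ZMod 2) W // finrank (ZMod 2) T = t} :=
    Nat.card_pos
  rcases Nat.eq_zero_or_pos t with ht0 | ht1
  · subst ht0
    have : IsEmpty {T : Submodule (ZMod 2) W // finrank (ZMod 2) T = 0 ∧ T ⊓ Tb ≠ ⊥} := by
      refine ⟨fun T => T.2.2 ?_⟩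
      have : T.1 = ⊥ := Submodule.finrank_eq_zero.mp T.2.1
      rw [this, bot_inf_eq]
    rw [Nat.card_of_isEmpty]
    simpa using cardApos
  -- now t ≥ 1
  set n := finrank (ZMod 2) W with hn'
  have hn1 : 1 ≤ n := le_trans (by omega) hn
  have hTbne : Tb ≠ ⊥ := by
    intro h
    rw [h, finrank_bot] at hTb
    omega
  obtain ⟨v₀, hv₀Tb, hv₀⟩ := (Submodule.ne_bot_iff Tb).mp hTbne
  set N := Nat.card {T : Submodule (ZMod 2) W // finrank (ZMod 2) T = t ∧ v₀ ∈ T} with hNdef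
  have huniform : ∀ v : W, v ≠ 0 →
      Nat.card {T : Submodule (ZMod 2) W // finrank (ZMod 2) T = t ∧ v ∈ T} = N :=
    fun v hv => card_mem_eq t hv hv₀
  have hpow : 2 ≤ 2 ^ n := by
    calc 2 = 2 ^ 1 := rfl
    _ ≤ 2 ^ n := Nat.pow_le_pow_right (by norm_num) hn1
  have : Fintype W := Fintype.ofFinite W
  have : Fintype ↥Tb := Fintype.ofFinite ↥Tb
  have E1 : Nat.card {a : W // id a ≠ 0} * N
      = Nat.card {T : Submodule (ZMod 2) W // finrank (ZMod 2) T = t} * (2 ^ t - 1) :=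
    (pair_count t id N (fun a ha => huniform a ha)).symm.trans (pair_count_T t)
  have hWnz : Nat.card {a : W // id a ≠ 0} = 2 ^ n - 1 := by
    rw [Nat.card_congr (Equiv.subtypeEquivRight (q := fun a : W => a ≠ 0) fun a => by simp)]
    exact card_nonzero W
  rw [hWnz] at E1
  -- count pairs over Tb
  have hP' := pair_count t (fun x : ↥Tb => (x : W)) N (fun a ha => huniform _ ha)
  have hTbnz : Nat.card {a : ↥Tb // (a : W) ≠ 0} = 2 ^ t - 1 := by
    rw [Nat.card_congr (Equiv.subtypeEquivRight (q := fun a : ↥Tb => a ≠ 0) fun a => by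
      simp)]
    rw [card_nonzero, hTb]
  rw [hTbnz] at hP'
  -- injection from the bad set into the Tb-pairs
  have key : ∀ T : {T : Submodule (ZMod 2) W // finrank (ZMod 2) T = t ∧ T ⊓ Tb ≠ ⊥},
      ∃ v : W, v ∈ T.1 ⊓ Tb ∧ v ≠ 0 := by
    intro T
    obtain ⟨v, hv, hv0⟩ := (Submodule.ne_bot_iff _).mp T.2.2
    exact ⟨v, hv, hv0⟩
  choose xv hxv hxv0 using key
  have hinj : Function.Injective
      (fun T : {T : Submodule (ZMod 2) W // finrank (ZMod 2) T = t ∧ T ⊓ Tb ≠ ⊥} =>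
        (⟨(⟨xv T, (Submodule.mem_inf.mp (hxv T)).2⟩, ⟨T.1, T.2.1⟩),
          hxv0 T, (Submodule.mem_inf.mp (hxv T)).1⟩ :
          {p : ↥Tb × {T : Submodule (ZMod 2) W // finrank (ZMod 2) T = t} //
            (p.1 : W) ≠ 0 ∧ (p.1 : W) ∈ p.2.1})) := by
    intro T1 T2 h
    have : T1.1 = T2.1 := congrArg (fun p => p.1.2.1) h
    exact Subtype.ext this
  have hB : Nat.card {T : Submodule (ZMod 2) W // finrank (ZMod 2) T = t ∧ T ⊓ Tb ≠ ⊥}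
      ≤ (2 ^ t - 1) * N := by
    rw [← hP']
    exact Nat.card_le_card_of_injective _ hinj
  have numeric := numeric_ineq t s n ht1 hn
  set cardA := Nat.card {T : Submodule (ZMod 2) W // finrank (ZMod 2) T = t}
  set cardB := Nat.card {T : Submodule (ZMod 2) W // finrank (ZMod 2) T = t ∧ T ⊓ Tb ≠ ⊥}
  have main : cardB * 2 ^ s * (2 ^ n - 1) < 2 ^ t * cardA * (2 ^ n - 1) := by
    calc cardB * 2 ^ s * (2 ^ n - 1) ≤ ((2 ^ t - 1) * N) * 2 ^ s * (2 ^ n - 1) := by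
          gcongr
    _ = ((2 ^ t - 1) * 2 ^ s) * ((2 ^ n - 1) * N) := by ring
    _ = ((2 ^ t - 1) * 2 ^ s) * (cardA * (2 ^ t - 1)) := by rw [E1]
    _ = ((2 ^ t - 1) * (2 ^ t - 1) * 2 ^ s) * cardA := by ring
    _ < (2 ^ t * (2 ^ n - 1)) * cardA := mul_lt_mul_of_pos_right numeric cardApos
    _ = 2 ^ t * cardA * (2 ^ n - 1) := by ring
  exact lt_of_mul_lt_mul_right main (Nat.zero_le _)

end Aux

section Transfer

variable {k : ℕ}

/-- The pairing map into the dual of `S`. -/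
def dotPhi (S : Submodule (ZMod 2) (Fin k → ZMod 2)) :
    (Fin k → ZMod 2) →ₗ[ZMod 2] Module.Dual (ZMod 2) S where
  toFun v :=
    { toFun := fun u => ∑ i, (u : Fin k → ZMod 2) i * v i
      map_add' := by
        intro u1 u2
        simp [add_mul, Finset.sum_add_distrib]
      map_smul' := by
        intro c u
        simp [Finset.mul_sum, mul_assoc] }
  map_add' := by
    intro v1 v2
    ext u
    simp [mul_add, Finset.sum_add_distrib]
  map_smul' := by
    intro c v
    ext u
    simp [Finset.mul_sum, mul_left_comm]

theorem dualSub_eq_ker (S : Submodule (ZMod 2) (Fin k → ZMod 2)) :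
    dualSub S = LinearMap.ker (dotPhi S) := by
  ext v
  constructor
  · intro hv
    rw [LinearMap.mem_ker]
    ext u
    exact hv u.1 u.2
  · intro hv u hu
    have := LinearMap.congr_fun (LinearMap.mem_ker.mp hv) ⟨u, hu⟩
    simpa [dotPhi] using this

theorem dual_finrank_ge (S : Submodule (ZMod 2) (Fin k → ZMod 2)) :
    k - finrank (ZMod 2) S ≤ finrank (ZMod 2) (dualSub S) := by
  have h := LinearMap.finrank_range_add_finrank_ker (dotPhi S)
  rw [Module.finrank_fin_fun] at h
  have hr : finrank (ZMod 2) (LinearMap.range (dotPhi S))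
      ≤ finrank (ZMod 2) (Module.Dual (ZMod 2) S) := Submodule.finrank_le _
  rw [Subspace.dual_finrank_eq] at hr
  rw [dualSub_eq_ker]
  omega

end Transfer

/-- if `T̄⊥ ⊆ S⊥` is a fixed subspace of dimension `t = k - r - s` and
`T⊥` is a uniformly random `t`-dimensional subspace of `S⊥` (as produced by the
step-wise basis-sampling process), then the probability that `T⊥ ∩ T̄⊥ ≠ {0}` is
strictly less than `2^(t-s)`; equivalently, counting subspaces,
`#{bad T} * 2^s < 2^t * #{all T}`. -/
theorem random_subspace_nontrivial_intersection_prob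
    (k r s t : ℕ) (hks : r + s ≤ k) (ht : t = k - r - s)
    (S : Submodule (ZMod 2) (Fin k → ZMod 2)) (hS : Module.finrank (ZMod 2) S = r)
    (Tbar : Submodule (ZMod 2) (Fin k → ZMod 2)) (hTbarle : Tbar ≤ dualSub S)
    (hTbar : Module.finrank (ZMod 2) Tbar = t) :
    Nat.card {T : Submodule (ZMod 2) (Fin k → ZMod 2) //
        T ≤ dualSub S ∧ Module.finrank (ZMod 2) T = t ∧ T ⊓ Tbar ≠ ⊥} * 2 ^ s
      < 2 ^ t *
        Nat.card {T : Submodule (ZMod 2) (Fin k → ZMod 2) //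
        T ≤ dualSub S ∧ Module.finrank (ZMod 2) T = t} := by
  classical
  have hdim : t + s ≤ finrank (ZMod 2) (dualSub S) := by
    have h := dual_finrank_ge S
    rw [hS] at h
    omega
  set D := dualSub S with hD
  have hmapTb : (Tbar.comap D.subtype).map D.subtype = Tbar := by
    rw [Submodule.map_comap_subtype, inf_eq_right.mpr hTbarle]
  have hTb' : finrank (ZMod 2) (Tbar.comap D.subtype) = t := by
    rw [← Submodule.finrank_map_subtype_eq D (Tbar.comap D.subtype), hmapTb]
    exact hTbar
  have botiff : ∀ X : Submodule (ZMod 2) (Fin k → ZMod 2), X ≤ D →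
      (X.comap D.subtype = ⊥ ↔ X = ⊥) := by
    intro X hX
    constructor
    · intro h
      have h2 := congrArg (Submodule.map D.subtype) h
      rwa [Submodule.map_comap_subtype, inf_eq_right.mpr hX, Submodule.map_bot] at h2
    · intro h
      rw [h, Submodule.comap_bot, Submodule.ker_subtype]
  have eA : {T : Submodule (ZMod 2) (Fin k → ZMod 2) //
        T ≤ D ∧ finrank (ZMod 2) T = t}
      ≃ {T' : Submodule (ZMod 2) D // finrank (ZMod 2) T' = t} :=
    { toFun := fun T => ⟨T.1.comap D.subtype, by
        rw [← Submodule.finrank_map_subtype_eq D, Submodule.map_comap_subtype,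
          inf_eq_right.mpr T.2.1]
        exact T.2.2⟩
      invFun := fun T' => ⟨T'.1.map D.subtype, Submodule.map_subtype_le D T'.1, by
        rw [Submodule.finrank_map_subtype_eq]; exact T'.2⟩
      left_inv := fun T => Subtype.ext (by
        simp only
        rw [Submodule.map_comap_subtype, inf_eq_right.mpr T.2.1])
      right_inv := fun T' => Subtype.ext (by
        simp only
        rw [Submodule.comap_map_eq, Submodule.ker_subtype, sup_bot_eq]) }
  have eB : {T : Submodule (ZMod 2) (Fin k → ZMod 2) //
        T ≤ D ∧ finrank (ZMod 2) T = t ∧ T ⊓ Tbar ≠ ⊥}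
      ≃ {T' : Submodule (ZMod 2) D //
        finrank (ZMod 2) T' = t ∧ T' ⊓ Tbar.comap D.subtype ≠ ⊥} :=
    { toFun := fun T => ⟨T.1.comap D.subtype, by
        constructor
        · rw [← Submodule.finrank_map_subtype_eq D, Submodule.map_comap_subtype,
            inf_eq_right.mpr T.2.1]
          exact T.2.2.1
        · rw [← Submodule.comap_inf, Ne, botiff _ (le_trans inf_le_left T.2.1)]
          exact T.2.2.2⟩
      invFun := fun T' => ⟨T'.1.map D.subtype, by
        refine ⟨Submodule.map_subtype_le D T'.1, ?_, ?_⟩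
        · rw [Submodule.finrank_map_subtype_eq]; exact T'.2.1
        · intro h
          apply T'.2.2
          apply Submodule.map_injective_of_injective (Submodule.injective_subtype D)
          rw [Submodule.map_inf _ (Submodule.injective_subtype D), hmapTb, h,
            Submodule.map_bot]⟩
      left_inv := fun T => Subtype.ext (by
        simp only
        rw [Submodule.map_comap_subtype, inf_eq_right.mpr T.2.1])
      right_inv := fun T' => Subtype.ext (by
        simp only
        rw [Submodule.comap_map_eq, Submodule.ker_subtype, sup_bot_eq]) }
  rw [Nat.card_congr eA, Nat.card_congr eB]
  exact main_count t s hdim (Tbar.comap D.subtype) hTb'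
end

section
/- Let Q : {0,1}^n → {0,1}^r × {0,1}^(n-r+e) be the folding coset partition function built from m := n - r claw-free permutation instances H_i(b,x) = Π_{i,b}(x) with effective-input extraction w ↦ w^(e): namely Q(w) = ((H_1(w_1),...,H_m(w_m)), (r, Σ_i w_i^(e))) where r_i is the first bit of w_i. Fix any index i* ∈ [m]. Then Q⁻¹ can be computed from the inverse permutations of all instances except i*, together with the public forward maps: given (y, (r, w̄)), recover w_j = Π⁻¹_{j,r_j}(y_j) for j ≠ i*, set w*^(e) = w̄ - Σ_{j≠i*} w_j^(e), reconstruct w_{i*} from (r_{i*}, y_{i*}, w*^(e)) using the public unfolding map, and verify H_{i*}(w_{i*}) = y_{i*}. This procedure computes exactly the same function as the full inverse Q⁻¹ (which uses all m trapdoors). -/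
/-- for the folding coset partition function built from `m`
claw-free permutation instances `Hᵢ(b,x) = Π_{i,b}(x)` (effective input = the
last `λ` bits), the inverse `Q⁻¹` computed with *all* `m` trapdoors (including
the sum-consistency verification) is, as a function, identical to the simulated
inverse that uses the inverse permutations of all instances *except* `i*`,
recovers the missing effective input `w* = w̄ - Σ_{j≠i*} w_j^(e)` by subtraction,
and verifies `H_{i*}(w_{i*}) = y_{i*}` using only the forward map at `i*`. -/
theorem folded_cpf_inverse_simulation (lam m : ℕ)
    (P : Fin m → ZMod 2 → Equiv.Perm (Fin lam → ZMod 2))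
    (istar : Fin m) :
    (fun inp : (Fin m → Fin lam → ZMod 2) × (Fin m → ZMod 2) × (Fin lam → ZMod 2) =>
        -- full inversion: invert every instance with its trapdoor,
        -- then verify that the effective inputs sum to `w̄`
        if (∑ j, (P j (inp.2.1 j)).symm (inp.1 j)) = inp.2.2 then
          some (fun j => ((inp.2.1 j, (P j (inp.2.1 j)).symm (inp.1 j)) :
            ZMod 2 × (Fin lam → ZMod 2)))
        else none)
      =
      (fun inp : (Fin m → Fin lam → ZMod 2) × (Fin m → ZMod 2) × (Fin lam → ZMod 2) =>
        -- simulated inversion, without the trapdoor of instance `i*`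
        let wj : Fin m → Fin lam → ZMod 2 := fun j => (P j (inp.2.1 j)).symm (inp.1 j)
        let wstar : Fin lam → ZMod 2 :=
          inp.2.2 - ∑ j ∈ Finset.univ.erase istar, wj j
        if P istar (inp.2.1 istar) wstar = inp.1 istar then
          some (fun j => if j = istar then (inp.2.1 istar, wstar)
            else ((inp.2.1 j, wj j) : ZMod 2 × (Fin lam → ZMod 2)))
        else none) := by
  
  funext inp
  set wj : Fin m → Fin lam → ZMod 2 := fun j => (P j (inp.2.1 j)).symm (inp.1 j) with hwj
  have hsum : ∑ j, wj j = wj istar + ∑ j ∈ Finset.univ.erase istar, wj j := by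
    rw [← Finset.add_sum_erase _ _ (Finset.mem_univ istar)]
  set wstar : Fin lam → ZMod 2 := inp.2.2 - ∑ j ∈ Finset.univ.erase istar, wj j with hws
  have hcond : ((∑ j, wj j) = inp.2.2) ↔ (P istar (inp.2.1 istar) wstar = inp.1 istar) := by
    rw [Equiv.apply_eq_iff_eq_symm_apply]
    constructor
    · intro h
      rw [hws, ← h, hsum]
      abel
    · intro h
      have h' : wstar = wj istar := h
      rw [hsum, ← h', hws]
      abel
  simp only
  by_cases h : (∑ j, wj j) = inp.2.2
  · have h2 := hcond.mp h
    rw [if_pos h, if_pos h2]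
    have hwst : wstar = wj istar := by
      rw [hws, ← h, hsum]; abel
    congr 1
    funext j
    by_cases hj : j = istar
    · subst hj; rw [if_pos rfl, ← hws, hwst]
    · simp [hj, hwj]
  · rw [if_neg h, if_neg (fun hc => h (hcond.mpr hc))]
end
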